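/- arXiv:math/0201152 — 4 statements merged into one kernel-verified Lean document; each statement's English description precedes it below -/
import Mathlib

section
/- Let S be any nonempty closed shift-invariant subset (subshift) of A^ℤ for a finite alphabet A, and let f, g : A → (0,∞) be two positive functions. Then the tiling space T_f is homeomorphic to the tiling space T_g. -/
/-!
Write `B_f(u, k)` for the Birkhoff sums, so that `T_f` is `S × ℝ` glued along
`(u, x) ~ (shiftZ k u, x - B_f(u, k))`. For each `u`, the reals are cut into the tiles
`[B_f(u, k), B_f(u, k + 1))`, of lengths `f (u k)`; the map `rescale f g u` sends each of them
affinely onto the corresponding `g`-tile. This is an increasing bijection of `ℝ` with inverse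
`rescale g f u`, hence continuous, and the cocycle identity for Birkhoff sums makes
`(u, x) ↦ (u, rescale f g u x)` compatible with the gluings. It is jointly continuous because
near `(u, x)` it only reads the letters of `u` between `0` and the tile of `x`, so it descends to a
homeomorphism `T_f ≃ₜ T_g`.
-/

open Filter Topology Matrix MeasureTheory

namespace Tilings

variable {n : ℕ}

/-- The shift by `k` on bi-infinite sequences: `(shiftZ k u) i = u (i + k)`. -/
def shiftZ (k : ℤ) (u : ℤ → Fin n) : ℤ → Fin n := fun i => u (i + k)

/-- The left shift. -/
abbrev shift (u : ℤ → Fin n) : ℤ → Fin n := shiftZ 1 u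

/-- The (signed) Birkhoff sum `f (u 0) + f (u 1) + ⋯ + f (u (k-1))` (for `k ≥ 0`;
for `k < 0` it is `-(f (u (-1)) + ⋯ + f (u k))`). -/
noncomputable def birkhoff (f : Fin n → ℝ) (u : ℤ → Fin n) (k : ℤ) : ℝ :=
  (∑ i ∈ Finset.range k.toNat, f (u (i : ℤ))) -
    ∑ i ∈ Finset.range (-k).toNat, f (u (-((i : ℤ) + 1)))

/-- The relation on `S × ℝ` generated by `(u, f u₀) ~ (shift u, 0)`:
`(u, x) ~ (shiftZ k u, x - (f (u 0) + ⋯ + f (u (k-1))))` for every `k : ℤ`. -/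
def tilingRel (S : Set (ℤ → Fin n)) (f : Fin n → ℝ) :
    (S × ℝ) → (S × ℝ) → Prop := fun p q =>
  ∃ k : ℤ, (q.1 : ℤ → Fin n) = shiftZ k (p.1 : ℤ → Fin n) ∧
    q.2 = p.2 - birkhoff f (p.1 : ℤ → Fin n) k

/-- The tiling space `T_f`: the quotient of `S × ℝ` by `(u, f u₀) ~ (shift u, 0)`. -/
def TilingSpace (S : Set (ℤ → Fin n)) (f : Fin n → ℝ) : Type :=
  Quot (tilingRel S f)

noncomputable instance (S : Set (ℤ → Fin n)) (f : Fin n → ℝ) :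
    TopologicalSpace (TilingSpace S f) :=
  inferInstanceAs (TopologicalSpace (Quot _))

/-- The translation flow on the tiling space: `T_t [(u, x)] = [(u, x + t)]`. -/
def flow (S : Set (ℤ → Fin n)) (f : Fin n → ℝ) (t : ℝ) :
    TilingSpace S f → TilingSpace S f :=
  Quot.map (fun p => (p.1, p.2 + t)) (by
    rintro ⟨u, x⟩ ⟨v, y⟩ ⟨k, h1, h2⟩
    exact ⟨k, h1, by dsimp at h2 ⊢; linarith⟩)

/-- `k` belongs to the point spectrum of `T_f` iff there is a nonzero continuous
eigenfunction `F` with `F (T_t x) = e^{i k t} F x`. -/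
def pointSpectrum (S : Set (ℤ → Fin n)) (f : Fin n → ℝ) : Set ℝ :=
  {k | ∃ F : TilingSpace S f → ℂ, Continuous F ∧ F ≠ 0 ∧
    ∀ (x : TilingSpace S f) (t : ℝ),
      F (flow S f t x) = Complex.exp (Complex.I * (k : ℂ) * (t : ℂ)) * F x}

/-- The translation flows on `T_f` and `T_g` are topologically conjugate. -/
def Conjugate (S : Set (ℤ → Fin n)) (f g : Fin n → ℝ) : Prop :=
  ∃ φ : TilingSpace S f ≃ₜ TilingSpace S g,
    ∀ (x : TilingSpace S f) (t : ℝ), φ (flow S f t x) = flow S g t (φ x)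

/-- Applying a substitution to a finite word. -/
def substWord (σ : Fin n → List (Fin n)) (w : List (Fin n)) : List (Fin n) :=
  (w.map σ).flatten

/-- The word `w` occurs (as a consecutive block) in the bi-infinite sequence `u`. -/
def occursIn (w : List (Fin n)) (u : ℤ → Fin n) : Prop :=
  ∃ r : ℤ, ∀ i : Fin w.length, u (r + (i : ℕ)) = w.get i

/-- The word `w` belongs to the language of `σ`: it occurs in some `σ^k(a)`. -/
def InLanguage (σ : Fin n → List (Fin n)) (w : List (Fin n)) : Prop :=
  ∃ (k : ℕ) (a : Fin n), w <:+: (substWord σ)^[k] [a]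

/-- The substitution subshift of `σ`: all bi-infinite sequences all of whose
finite subwords belong to the language of `σ`.  (For a primitive aperiodic `σ`
this is the closure of the shift orbit of a sequence whose right half is fixed
by `σ`, and it is minimal.) -/
def SubshiftOf (σ : Fin n → List (Fin n)) : Set (ℤ → Fin n) :=
  {u | ∀ w : List (Fin n), occursIn w u → InLanguage σ w}

/-- The substitution matrix (over ℝ): the `(i,j)` entry is the number of
occurrences of the letter `j` in `σ i`. -/
noncomputable def substMatrix (σ : Fin n → List (Fin n)) : Matrix (Fin n) (Fin n) ℝ :=
  Matrix.of fun i j => ((σ i).count j : ℝ)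

/-- `σ` is primitive: some power of its substitution matrix has strictly positive entries. -/
def Primitive (σ : Fin n → List (Fin n)) : Prop :=
  ∃ k : ℕ, 0 < k ∧ ∀ i j, 0 < ((substMatrix σ) ^ k) i j

/-- `σ` is aperiodic: its subshift contains no shift-periodic sequence. -/
def Aperiodic (σ : Fin n → List (Fin n)) : Prop :=
  ∀ u ∈ SubshiftOf σ, ∀ p : ℤ, p ≠ 0 → ¬ (∀ i, u (i + p) = u i)

/-- The population (column) vector of a word, as a real vector:
`popVec w j` is the number of occurrences of the letter `j` in `w`. -/
def popVec (w : List (Fin n)) : Fin n → ℝ := fun j => (w.count j : ℝ)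

/-- `w` is a recurrence word in `u`: `w = u_r ⋯ u_s` occurs in `u` and `u_{s+1} = u_r`. -/
def IsRecurrenceWordIn (u : ℤ → Fin n) (w : List (Fin n)) : Prop :=
  w ≠ [] ∧ ∃ r : ℤ, (∀ i : Fin w.length, u (r + (i : ℕ)) = w.get i) ∧
    u (r + w.length) = u r

/-- `v` is a recurrence vector of the subshift `S`: the population vector of a
recurrence word of some `u ∈ S`. -/
def IsRecurrenceVector (S : Set (ℤ → Fin n)) (v : Fin n → ℝ) : Prop :=
  ∃ u ∈ S, ∃ w : List (Fin n), IsRecurrenceWordIn u w ∧ v = popVec w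

/-- A full recurrence vector: `v, Mv, …, M^{n-1}v` are linearly independent. -/
def IsFullRecurrenceVector (σ : Fin n → List (Fin n)) (v : Fin n → ℝ) : Prop :=
  IsRecurrenceVector (SubshiftOf σ) v ∧
    LinearIndependent ℝ (fun i : Fin n => ((substMatrix σ) ^ (i : ℕ)).mulVec v)

/-- The `L`-length of a word: `L` dotted with the population vector. -/
def wordLength (L : Fin n → ℝ) (w : List (Fin n)) : ℝ :=
  dotProduct L (popVec w)

/-- The word `w` occurs in (some element of) the subshift `S`. -/
def OccursInSubshift (S : Set (ℤ → Fin n)) (w : List (Fin n)) : Prop :=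
  ∃ u ∈ S, occursIn w u

/-- `w'` is periodic with (letter-)period `m`. -/
def PeriodicWithPeriod (w' : List (Fin n)) (m : ℕ) : Prop :=
  ∀ (i : ℕ) (h : i + m < w'.length),
    w'.get ⟨i + m, h⟩ = w'.get ⟨i, by omega⟩

/-- `v` is a repetition vector of degree `p` for the tiling space with length
vector `L`, representing the word `w`. -/
def IsRepetitionVectorWith (S : Set (ℤ → Fin n)) (L : Fin n → ℝ) (p : ℝ)
    (v : Fin n → ℝ) (w : List (Fin n)) : Prop :=
  IsRecurrenceVector S v ∧ popVec w = v ∧ w ≠ [] ∧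
    ∃ w' : List (Fin n), w <:+: w' ∧ PeriodicWithPeriod w' w.length ∧
      p * wordLength L w ≤ wordLength L w' ∧ OccursInSubshift S w'

/-- `v` is a repetition vector of degree `p` for the tiling space with length vector `L`. -/
def IsRepetitionVector (S : Set (ℤ → Fin n)) (L : Fin n → ℝ) (p : ℝ)
    (v : Fin n → ℝ) : Prop :=
  ∃ w : List (Fin n), IsRepetitionVectorWith S L p v w

/-- The distance from a real number to the nearest integer. -/
noncomputable def distToInt (x : ℝ) : ℝ := |x - round x|

/-- The cylinder set `[w] × I` in the tiling space: classes of `(u, t)` with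
`u₀ ⋯ u_k = w` and `t ∈ I`. -/
def cylinder (S : Set (ℤ → Fin n)) (f : Fin n → ℝ) (w : List (Fin n)) (I : Set ℝ) :
    Set (TilingSpace S f) :=
  {x | ∃ (u : S) (t : ℝ), t ∈ I ∧ x = Quot.mk _ (u, t) ∧
    ∀ i : Fin w.length, (u : ℤ → Fin n) ((i : ℕ) : ℤ) = w.get i}

/-- `ℤ[1/m]` as a subset of ℝ: rationals of the form `j / m^r`. -/
def ZinvSet (m : ℕ) : Set ℝ :=
  {x | ∃ (j : ℤ) (r : ℕ), x = (j : ℝ) / (m : ℝ) ^ r}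

@[simp]
lemma shiftZ_apply (k : ℤ) (u : ℤ → Fin n) (i : ℤ) : shiftZ k u i = u (i + k) := rfl

section Birkhoff

variable (f : Fin n → ℝ) (u : ℤ → Fin n)

@[simp]
lemma birkhoff_zero : birkhoff f u 0 = 0 := by
  simp [birkhoff]

lemma birkhoff_add_one (k : ℤ) : birkhoff f u (k + 1) = birkhoff f u k + f (u k) := by
  rcases le_or_gt 0 k with hk | hk
  · rw [birkhoff, birkhoff, show (k + 1).toNat = k.toNat + 1 by omega,
      show (-(k + 1)).toNat = 0 by omega, show (-k).toNat = 0 by omega, Finset.sum_range_succ,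
      Int.toNat_of_nonneg hk]
    simp
  · rw [birkhoff, birkhoff, show (k + 1).toNat = 0 by omega, show k.toNat = 0 by omega,
      show (-k).toNat = (-(k + 1)).toNat + 1 by omega, Finset.sum_range_succ,
      show -(((-(k + 1)).toNat : ℤ) + 1) = k by omega]
    ring

lemma birkhoff_add (a b : ℤ) :
    birkhoff f u (a + b) = birkhoff f u a + birkhoff f (shiftZ a u) b := by
  induction b using Int.induction_on with
  | zero => simp
  | succ m ih =>
    rw [← add_assoc, birkhoff_add_one, ih, birkhoff_add_one, shiftZ_apply, add_comm (m : ℤ) a]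
    ring
  | pred m ih =>
    have h := birkhoff_add_one f u (a + (-m - 1))
    have hs := birkhoff_add_one f (shiftZ a u) (-m - 1)
    rw [show a + (-m - 1) + 1 = a + -m by ring] at h
    rw [sub_add_cancel, shiftZ_apply, add_comm _ a] at hs
    linarith

lemma birkhoff_shiftZ (a b : ℤ) :
    birkhoff f (shiftZ a u) b = birkhoff f u (a + b) - birkhoff f u a := by
  rw [birkhoff_add]; ring

variable {f u}

lemma birkhoff_congr {v : ℤ → Fin n} {k : ℤ}
    (h : ∀ i, min k 0 ≤ i → i < max k 0 → u i = v i) :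
    birkhoff f u k = birkhoff f v k := by
  unfold birkhoff
  congr 1 <;> refine Finset.sum_congr rfl fun i hi => ?_ <;> rw [Finset.mem_range] at hi <;>
    rw [h _ (by omega) (by omega)]

lemma mul_le_birkhoff {c : ℝ} (hc : ∀ i, c ≤ f i) {k : ℤ} (hk : 0 ≤ k) :
    c * k ≤ birkhoff f u k := by
  lift k to ℕ using hk
  rw [birkhoff, show (-(k : ℤ)).toNat = 0 by omega]
  simpa [mul_comm] using Finset.card_nsmul_le_sum (Finset.range k) _ c fun i _ => hc _

lemma birkhoff_strictMono (hf : ∀ i, 0 < f i) : StrictMono (birkhoff f u) :=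
  strictMono_of_lt_add_one fun k _ => by
    rw [birkhoff_add_one]; linarith [hf (u k)]

lemma exists_birkhoff_le_lt (hf : ∀ i, 0 < f i) (x : ℝ) :
    ∃ k, birkhoff f u k ≤ x ∧ x < birkhoff f u (k + 1) := by
  have : Nonempty (Fin n) := ⟨u 0⟩
  obtain ⟨a, ha⟩ := Finite.exists_min f
  obtain ⟨N, hN⟩ := exists_nat_gt (|x| / f a)
  have hNx : |x| < f a * N := by rwa [div_lt_iff₀' (hf a)] at hN
  have hlo : birkhoff f u (-N) ≤ x := by
    have h := mul_le_birkhoff (u := shiftZ (-N) u) ha (Int.natCast_nonneg N)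
    rw [birkhoff_shiftZ, neg_add_cancel, birkhoff_zero] at h
    push_cast at h
    linarith [neg_abs_le x]
  have hhi : x < birkhoff f u N := by
    have h := mul_le_birkhoff (u := u) ha (Int.natCast_nonneg N)
    push_cast at h
    linarith [le_abs_self x]
  obtain ⟨k, hk, hmax⟩ := Int.exists_greatest_of_bdd (P := fun k => birkhoff f u k ≤ x)
    ⟨N, fun k hk => ((birkhoff_strictMono hf).lt_iff_lt.mp (hk.trans_lt hhi)).le⟩ ⟨-N, hlo⟩
  exact ⟨k, hk, not_le.mp fun h => by simpa using hmax (k + 1) h⟩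

end Birkhoff

open Classical in
/-- The index `k` of the tile `[birkhoff f u k, birkhoff f u (k + 1))` containing `x`
(junk value `0` when `f` is not positive). -/
noncomputable def tileIndex (f : Fin n → ℝ) (u : ℤ → Fin n) (x : ℝ) : ℤ :=
  if h : ∃ k, birkhoff f u k ≤ x ∧ x < birkhoff f u (k + 1) then h.choose else 0

section TileIndex

variable {f : Fin n → ℝ} {u : ℤ → Fin n} {x : ℝ} {k : ℤ}

lemma tileIndex_spec (hf : ∀ i, 0 < f i) (u : ℤ → Fin n) (x : ℝ) :
    birkhoff f u (tileIndex f u x) ≤ x ∧ x < birkhoff f u (tileIndex f u x + 1) := by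
  rw [tileIndex, dif_pos (exists_birkhoff_le_lt hf x)]
  exact (exists_birkhoff_le_lt hf x).choose_spec

lemma tileIndex_eq (hf : ∀ i, 0 < f i) (h₁ : birkhoff f u k ≤ x)
    (h₂ : x < birkhoff f u (k + 1)) : tileIndex f u x = k := by
  obtain ⟨s₁, s₂⟩ := tileIndex_spec hf u x
  have := (birkhoff_strictMono hf).lt_iff_lt.mp (h₁.trans_lt s₂)
  have := (birkhoff_strictMono hf).lt_iff_lt.mp (s₁.trans_lt h₂)
  omega

lemma tileIndex_mono (hf : ∀ i, 0 < f i) (u : ℤ → Fin n) : Monotone (tileIndex f u) :=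
  fun x y hxy => Int.lt_add_one_iff.mp <| (birkhoff_strictMono hf).lt_iff_lt.mp <|
    (tileIndex_spec hf u x).1.trans_lt (hxy.trans_lt (tileIndex_spec hf u y).2)

end TileIndex

noncomputable def rescale (f g : Fin n → ℝ) (u : ℤ → Fin n) (x : ℝ) : ℝ :=
  birkhoff g u (tileIndex f u x) +
    (x - birkhoff f u (tileIndex f u x)) * (g (u (tileIndex f u x)) / f (u (tileIndex f u x)))

section Rescale

variable {f g : Fin n → ℝ}

lemma rescale_of_mem_tile (hf : ∀ i, 0 < f i) {u : ℤ → Fin n} {x : ℝ} {k : ℤ}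
    (h₁ : birkhoff f u k ≤ x) (h₂ : x < birkhoff f u (k + 1)) :
    rescale f g u x = birkhoff g u k + (x - birkhoff f u k) * (g (u k) / f (u k)) := by
  rw [rescale, tileIndex_eq hf h₁ h₂]

lemma rescale_sub_birkhoff (hf : ∀ i, 0 < f i) (u : ℤ → Fin n) (x : ℝ) (k : ℤ) :
    rescale f g (shiftZ k u) (x - birkhoff f u k) = rescale f g u x - birkhoff g u k := by
  obtain ⟨h₁, h₂⟩ := tileIndex_spec hf u x
  set j := tileIndex f u x
  have e₁ : k + (j - k) = j := by ring
  have e₂ : k + (j - k + 1) = j + 1 := by ring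
  rw [rescale_of_mem_tile (k := j - k) hf (by rw [birkhoff_shiftZ, e₁]; linarith)
    (by rw [birkhoff_shiftZ, e₂]; linarith), rescale, birkhoff_shiftZ, birkhoff_shiftZ, e₁,
    shiftZ_apply, sub_add_cancel]
  ring

lemma rescale_congr (hf : ∀ i, 0 < f i) {u v : ℤ → Fin n} {x : ℝ} {k : ℤ}
    (huv : ∀ i, min k 0 ≤ i → i ≤ max k 0 → u i = v i)
    (h₁ : birkhoff f u k ≤ x) (h₂ : x < birkhoff f u (k + 1)) :
    rescale f g v x = rescale f g u x := by
  have hB : ∀ (h : Fin n → ℝ) (m : ℤ), k ≤ m → m ≤ k + 1 → birkhoff h v m = birkhoff h u m :=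
    fun h m hm₁ hm₂ => (birkhoff_congr fun i hi₁ hi₂ => huv i (by omega) (by omega)).symm
  rw [rescale_of_mem_tile hf h₁ h₂, rescale_of_mem_tile hf (by rwa [hB f k le_rfl (by omega)])
    (by rwa [hB f (k + 1) (by omega) le_rfl]), hB f k le_rfl (by omega), hB g k le_rfl (by omega),
    huv k (by omega) (by omega)]

lemma rescale_mem_tile (hf : ∀ i, 0 < f i) (hg : ∀ i, 0 < g i) (u : ℤ → Fin n) (x : ℝ) :
    birkhoff g u (tileIndex f u x) ≤ rescale f g u x ∧
      rescale f g u x < birkhoff g u (tileIndex f u x + 1) := by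
  obtain ⟨h₁, h₂⟩ := tileIndex_spec hf u x
  set k := tileIndex f u x
  have hfk := hf (u k)
  have hgk := hg (u k)
  rw [birkhoff_add_one] at h₂ ⊢
  rw [rescale]
  constructor
  · have : 0 ≤ (x - birkhoff f u k) * (g (u k) / f (u k)) := by
      exact mul_nonneg (by linarith) (by positivity)
    linarith
  · have : (x - birkhoff f u k) * (g (u k) / f (u k)) < g (u k) := by
      rw [mul_div_assoc', div_lt_iff₀ hfk]; nlinarith
    linarith

lemma rescale_rescale (hf : ∀ i, 0 < f i) (hg : ∀ i, 0 < g i) (u : ℤ → Fin n) (x : ℝ) :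
    rescale g f u (rescale f g u x) = x := by
  obtain ⟨h₁, h₂⟩ := rescale_mem_tile hf hg u x
  rw [rescale_of_mem_tile hg h₁ h₂, rescale]
  have := hf (u (tileIndex f u x))
  have := hg (u (tileIndex f u x))
  field_simp
  ring

lemma monotone_rescale (hf : ∀ i, 0 < f i) (hg : ∀ i, 0 < g i) (u : ℤ → Fin n) :
    Monotone (rescale f g u) := by
  intro x y hxy
  rcases (tileIndex_mono hf u hxy).lt_or_eq with hlt | heq
  · calc rescale f g u x
        ≤ birkhoff g u (tileIndex f u x + 1) := (rescale_mem_tile hf hg u x).2.le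
      _ ≤ birkhoff g u (tileIndex f u y) := (birkhoff_strictMono hg).monotone hlt
      _ ≤ rescale f g u y := (rescale_mem_tile hf hg u y).1
  · rw [rescale, rescale, heq]
    have := hf (u (tileIndex f u y))
    have := hg (u (tileIndex f u y))
    gcongr

lemma continuous_rescale (hf : ∀ i, 0 < f i) (hg : ∀ i, 0 < g i) (u : ℤ → Fin n) :
    Continuous (rescale f g u) :=
  (monotone_rescale hf hg u).continuous_of_surjective
    fun y => ⟨rescale g f u y, rescale_rescale hg hf u y⟩

end Rescale

lemma continuous_uncurry_rescale {f g : Fin n → ℝ} (hf : ∀ i, 0 < f i) (hg : ∀ i, 0 < g i) :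
    Continuous fun p : (ℤ → Fin n) × ℝ => rescale f g p.1 p.2 := by
  refine continuous_iff_continuousAt.mpr fun ⟨u, x⟩ => ?_
  obtain ⟨h₁, h₂⟩ := tileIndex_spec hf u x
  set j := tileIndex f u x
  have hj : birkhoff f u (j - 1) < x := (birkhoff_strictMono hf (by omega)).trans_le h₁
  -- Near `x` lie only the tiles `j - 1` and `j` of `u`, fixed by the letters from `0` to `j`.
  have hcyl : (Set.Icc (min (j - 1) 0) (max j 0)).pi (fun i => {u i}) ∈ 𝓝 u :=
    (isOpen_set_pi (Set.finite_Icc _ _) fun i _ => isOpen_discrete _).mem_nhds fun i _ => rfl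
  have hloc : (fun p : (ℤ → Fin n) × ℝ => rescale f g p.1 p.2) =ᶠ[𝓝 (u, x)]
      fun p => rescale f g u p.2 := by
    filter_upwards [prod_mem_nhds hcyl (Ioo_mem_nhds hj h₂)] with ⟨v, y⟩ ⟨hv, hy₁, hy₂⟩
    have huv (i : ℤ) (hi₁ : min (j - 1) 0 ≤ i) (hi₂ : i ≤ max j 0) : u i = v i :=
      (hv i ⟨hi₁, hi₂⟩).symm
    rcases lt_or_ge y (birkhoff f u j) with hy | hy
    · exact rescale_congr hf (fun i _ _ => huv i (by omega) (by omega)) hy₁.le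
        (by rwa [sub_add_cancel])
    · exact rescale_congr hf (fun i _ _ => huv i (by omega) (by omega)) hy hy₂
  exact ((continuous_rescale hf hg u).comp continuous_snd).continuousAt.congr hloc.symm

noncomputable def retile (S : Set (ℤ → Fin n)) {f : Fin n → ℝ} (g : Fin n → ℝ)
    (hf : ∀ i, 0 < f i) : TilingSpace S f → TilingSpace S g :=
  Quot.map (fun p => (p.1, rescale f g p.1 p.2)) fun _ _ ⟨k, hv, hy⟩ =>
    ⟨k, hv, by rw [hy, hv, rescale_sub_birkhoff hf]⟩

section Retile

variable {S : Set (ℤ → Fin n)} {f g : Fin n → ℝ}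

lemma continuous_retile (hf : ∀ i, 0 < f i) (hg : ∀ i, 0 < g i) :
    Continuous (retile S g hf) := by
  have h : Continuous fun p : S × ℝ => ((p.1 : ℤ → Fin n), p.2) := by fun_prop
  have h1 := (continuous_uncurry_rescale hf hg).comp h
  exact continuous_quot_map _ (continuous_fst.prodMk h1)

lemma retile_retile (hf : ∀ i, 0 < f i) (hg : ∀ i, 0 < g i) (z : TilingSpace S f) :
    retile S f hg (retile S g hf z) = z := by
  induction z using Quot.ind with
  | mk p => exact congrArg (Quot.mk _) (Prod.ext rfl (rescale_rescale hf hg _ _))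

end Retile

theorem statement0_general (n : ℕ) (S : Set (ℤ → Fin n))
    (f g : Fin n → ℝ) (hf : ∀ i, 0 < f i) (hg : ∀ i, 0 < g i) :
    Nonempty (TilingSpace S f ≃ₜ TilingSpace S g) :=
  ⟨{ toFun := retile S g hf
     invFun := retile S f hg
     left_inv := retile_retile hf hg
     right_inv := retile_retile hg hf
     continuous_toFun := continuous_retile hf hg
     continuous_invFun := continuous_retile hg hf }⟩

/-- For any subshift `S` (nonempty, closed, shift-invariant subset of `A^ℤ`)
and any two positive length functions `f, g`, the tiling spaces `T_f` and `T_g`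
are homeomorphic. -/
theorem statement0 (n : ℕ) (S : Set (ℤ → Fin n))
    (hne : S.Nonempty) (hclosed : IsClosed S)
    (hinv : ∀ u : ℤ → Fin n, u ∈ S ↔ shift u ∈ S)
    (f g : Fin n → ℝ) (hf : ∀ i, 0 < f i) (hg : ∀ i, 0 < g i) :
    Nonempty (TilingSpace S f ≃ₜ TilingSpace S g) :=
  statement0_general n S f g hf hg

end Tilings
end

section
/- Let a_0, …, a_{n−1} be integers such that every complex root of the polynomial p(λ) = λ^n + a_{n−1}λ^{n−1} + ⋯ + a_0 has modulus at least 1. Let t : ℕ → ℝ satisfy the recurrence t_{m+n} = −(a_{n−1}t_{m+n−1} + ⋯ + a_0 t_m) for all m, and suppose the distance from t_m to the nearest integer tends to 0 as m → ∞. Then there exists N such that t_m is an integer for all m ≥ N. -/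
open Filter Topology Polynomial

/-! The rounding errors `g m = t m - round (t m)` tend to `0` and satisfy the recurrence up to
integers; an integer sequence tending to `0` is eventually `0`, so a tail of `g` satisfies the
recurrence exactly, i.e. `p(S) g = 0` for the shift operator `S`. Over `ℂ`, `p` factors as
`∏ (X - λ)`; each `S - λ` maps null sequences to null sequences and, since `|λ| ≥ 1`, is injective
on them (the norm of a solution of `g (m + 1) = λ g m` is nondecreasing). Hence that tail of `g`
vanishes. -/

def seqShift (R M : Type*) [Semiring R] [AddCommMonoid M] [Module R M] :
    Module.End R (ℕ → M) :=
  LinearMap.funLeft R M (· + 1)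

section Shift

variable {R M : Type*} [CommSemiring R] [AddCommMonoid M] [Module R M]

theorem seqShift_pow_apply (k : ℕ) (e : ℕ → M) (m : ℕ) :
    (seqShift R M ^ k) e m = e (m + k) := by
  induction k generalizing e m with
  | zero => rfl
  | succ k ih => rw [pow_succ, Module.End.mul_apply, ih]; rfl

theorem aeval_seqShift_apply (q : R[X]) (e : ℕ → M) (m : ℕ) :
    aeval (seqShift R M) q e m =
      ∑ i ∈ Finset.range (q.natDegree + 1), q.coeff i • e (m + i) := by
  simp [aeval_eq_sum_range, seqShift_pow_apply]

theorem tendsto_aeval_seqShift [TopologicalSpace M] [ContinuousAdd M] [ContinuousConstSMul R M]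
    (q : R[X]) {e : ℕ → M} (he : Tendsto e atTop (𝓝 0)) :
    Tendsto (aeval (seqShift R M) q e) atTop (𝓝 0) := by
  have := tendsto_finsetSum (Finset.range (q.natDegree + 1))
    fun i _ ↦ (he.comp (tendsto_add_atTop_nat i)).const_smul (q.coeff i)
  simpa [funext (aeval_seqShift_apply q e)] using this

end Shift

section Decay

variable {𝕜 E : Type*} [NormedField 𝕜] [NormedAddCommGroup E] [NormedSpace 𝕜 E]

theorem eq_zero_of_aeval_seqShift_X_sub_C_eq_zero {c : 𝕜} (hc : 1 ≤ ‖c‖) {e : ℕ → E}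
    (he : Tendsto e atTop (𝓝 0)) (h : aeval (seqShift 𝕜 E) (X - C c) e = 0) : e = 0 := by
  have hstep : ∀ m, e (m + 1) = c • e m := fun m ↦ by
    simpa [sub_eq_zero, seqShift] using congrFun h m
  have hmono : Monotone fun m ↦ ‖e m‖ := monotone_nat_of_le_succ fun m ↦ by
    rw [hstep, norm_smul]
    exact le_mul_of_one_le_left (norm_nonneg _) hc
  funext m
  exact norm_le_zero_iff.1 (hmono.ge_of_tendsto (by simpa using he.norm) m)

theorem eq_zero_of_aeval_seqShift_eq_zero [IsAlgClosed 𝕜] {q : 𝕜[X]}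
    (hq : ∀ z, q.IsRoot z → 1 ≤ ‖z‖) {e : ℕ → E} (he : Tendsto e atTop (𝓝 0))
    (h : aeval (seqShift 𝕜 E) q e = 0) : e = 0 := by
  have hq0 : q ≠ 0 := by
    rintro rfl
    exact absurd (hq 0 (by simp)) (by simp)
  let NoNullSolution : 𝕜[X] → Prop := fun p ↦
    ∀ e : ℕ → E, Tendsto e atTop (𝓝 0) → aeval (seqShift 𝕜 E) p e = 0 → e = 0
  have hmul : ∀ p r, NoNullSolution p → NoNullSolution r → NoNullSolution (p * r) :=
    fun p r hp hr e he h ↦ hr e he <| hp _ (tendsto_aeval_seqShift r he) <| by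
      rwa [map_mul, Module.End.mul_apply] at h
  have hC : NoNullSolution (C q.leadingCoeff) := fun e _ h ↦ by
    simpa [leadingCoeff_ne_zero.2 hq0] using h
  have hprod : NoNullSolution (q.roots.map (X - C ·)).prod := by
    refine Multiset.prod_induction _ _ hmul (fun e _ h ↦ by simpa using h) ?_
    simp only [Multiset.mem_map]
    rintro _ ⟨z, hz, rfl⟩
    exact fun e he ↦ eq_zero_of_aeval_seqShift_X_sub_C_eq_zero (hq z (isRoot_of_mem_roots hz)) he
  rw [← C_leadingCoeff_mul_prod_multiset_X_sub_C (p := q)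
    IsAlgClosed.card_roots_eq_natDegree] at h
  exact hmul _ _ hC hprod e he h

end Decay

namespace LinearRecurrence

theorem aeval_charPoly_seqShift_apply {R : Type*} [CommRing R] (E : LinearRecurrence R)
    (u : ℕ → R) (m : ℕ) :
    aeval (seqShift R R) E.charPoly u m = u (m + E.order) - ∑ i, E.coeffs i * u (m + i) := by
  simp [charPoly, ← C_mul_X_pow_eq_monomial, seqShift_pow_apply]

theorem eq_zero_of_isSolution_of_tendsto_zero {𝕜 : Type*} [NormedField 𝕜] [IsAlgClosed 𝕜]
    (E : LinearRecurrence 𝕜) (hroots : ∀ z, E.charPoly.IsRoot z → 1 ≤ ‖z‖) {u : ℕ → 𝕜}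
    (hu : E.IsSolution u) (hlim : Tendsto u atTop (𝓝 0)) : u = 0 :=
  eq_zero_of_aeval_seqShift_eq_zero hroots hlim <| funext fun m ↦ by
    rw [aeval_charPoly_seqShift_apply, hu m, sub_self, Pi.zero_apply]

end LinearRecurrence

theorem Int.eventually_eq_zero_of_tendsto_cast {ι : Type*} {l : Filter ι} {k : ι → ℤ}
    (h : Tendsto (fun i ↦ (k i : ℝ)) l (𝓝 0)) : ∀ᶠ i in l, k i = 0 := by
  have : Tendsto k l (𝓝 0) :=
    Int.isClosedEmbedding_coe_real.isEmbedding.tendsto_nhds_iff.2 <| by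
      simpa [Function.comp_def] using h
  rwa [nhds_discrete, tendsto_pure] at this

theorem eventually_recurrence_sub_round {n : ℕ} (a : Fin n → ℤ) {t : ℕ → ℝ}
    (hrec : ∀ m, t (m + n) = -∑ i : Fin n, (a i : ℝ) * t (m + i))
    (hconv : Tendsto (fun m ↦ t m - round (t m)) atTop (𝓝 0)) :
    ∀ᶠ m in atTop, t (m + n) - round (t (m + n)) =
      -∑ i : Fin n, (a i : ℝ) * (t (m + i) - round (t (m + i))) := by
  set g : ℕ → ℝ := fun m ↦ t m - round (t m)
  let K : ℕ → ℤ := fun m ↦ round (t (m + n)) + ∑ i : Fin n, a i * round (t (m + i))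
  have hK : ∀ m, (K m : ℝ) = -(g (m + n) + ∑ i : Fin n, (a i : ℝ) * g (m + i)) := fun m ↦ by
    simp only [K, g, mul_sub, Finset.sum_sub_distrib, hrec m]
    push_cast
    ring
  have hshift : ∀ j, Tendsto (fun m ↦ g (m + j)) atTop (𝓝 0) :=
    fun j ↦ hconv.comp (tendsto_add_atTop_nat j)
  have hKlim : Tendsto (fun m ↦ (K m : ℝ)) atTop (𝓝 0) := by
    have := ((hshift n).add (tendsto_finsetSum (Finset.univ : Finset (Fin n))
      fun i _ ↦ (hshift i).const_mul (a i : ℝ))).neg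
    simpa [hK] using this
  filter_upwards [Int.eventually_eq_zero_of_tendsto_cast hKlim] with m hm
  have := hK m
  rw [hm, Int.cast_zero] at this
  linarith

/-- if all complex roots of `p(λ) = λ^n + a_{n-1}λ^{n-1} + ⋯ + a₀`
(with integer coefficients) have modulus at least `1`, and the real sequence `t`
satisfies the recurrence `t_{m+n} = −(a_{n-1}t_{m+n-1} + ⋯ + a₀ t_m)` with the
distance from `t_m` to the nearest integer tending to `0`, then `t_m` is an
integer for all sufficiently large `m`. -/
theorem statement15 (n : ℕ) (a : Fin n → ℤ)
    (hroots : ∀ z : ℂ, (z ^ n + ∑ i : Fin n, (a i : ℂ) * z ^ (i : ℕ)) = 0 →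
      1 ≤ ‖z‖)
    (t : ℕ → ℝ)
    (hrec : ∀ m : ℕ, t (m + n) = -∑ i : Fin n, (a i : ℝ) * t (m + i))
    (hconv : Tendsto (fun m : ℕ => |t m - round (t m)|) atTop (𝓝 0)) :
    ∃ N : ℕ, ∀ m : ℕ, N ≤ m → ∃ j : ℤ, t m = (j : ℝ) := by
  set g : ℕ → ℝ := fun m ↦ t m - round (t m)
  have hg : Tendsto g atTop (𝓝 0) := (tendsto_zero_iff_abs_tendsto_zero g).2 hconv
  obtain ⟨N, hN⟩ := eventually_atTop.1 (eventually_recurrence_sub_round a hrec hg)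
  let E : LinearRecurrence ℂ := ⟨n, fun i ↦ -(a i : ℂ)⟩
  have hEroots : ∀ z, E.charPoly.IsRoot z → 1 ≤ ‖z‖ := fun z hz ↦ hroots z <| by
    simpa [E, LinearRecurrence.charPoly, ← C_mul_X_pow_eq_monomial, sub_eq_add_neg,
      eval_finsetSum] using hz
  have hsol : E.IsSolution fun m ↦ (g (m + N) : ℂ) := fun m ↦ by
    have := congrArg ((↑) : ℝ → ℂ) (hN (m + N) (by omega))
    simp only [E, g, neg_mul, Finset.sum_neg_distrib]
    push_cast at this ⊢
    simpa only [add_right_comm] using this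
  have hlim : Tendsto (fun m ↦ (g (m + N) : ℂ)) atTop (𝓝 0) :=
    (Complex.continuous_ofReal.tendsto' 0 0 Complex.ofReal_zero).comp
      (hg.comp (tendsto_add_atTop_nat N))
  have hzero := E.eq_zero_of_isSolution_of_tendsto_zero hEroots hsol hlim
  refine ⟨N, fun m hm ↦ ⟨round (t m), ?_⟩⟩
  have := congrFun hzero (m - N)
  simp only [Nat.sub_add_cancel hm, g, Pi.zero_apply, Complex.ofReal_eq_zero, sub_eq_zero] at this
  exact this
end

section
/- Let a_0, …, a_{n−1} be integers such that every complex root of the polynomial p(λ) = λ^n + a_{n−1}λ^{n−1} + ⋯ + a_0 has modulus at least 1. If t : ℕ → ℝ satisfies t_{m+n} = −(a_{n−1}t_{m+n−1} + ⋯ + a_0 t_m) for all m and t_m → 0 as m → ∞, then t_m = 0 for all m. -/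
/-!
Let `S` be the left shift on sequences, so that the recurrence says `p(S) t = 0`. Over `ℂ`,
`p = ∏ (X - r)` with every `‖r‖ ≥ 1`. Writing `p = (X - r) q` and `u = q(S) t`, we get
`u (m + 1) = r u m`, so `u` is geometric with ratio of modulus at least `1`; but `u` is a finite
combination of shifts of `t`, hence tends to `0`. Thus `u = 0`, and induction on the number of
factors gives `t = 0`.
-/

open Filter Topology Polynomial

section ShiftOperator

variable {K E : Type*}

def shiftOp [Semiring K] [AddCommMonoid E] [Module K E] : Module.End K (ℕ → E) :=
  LinearMap.funLeft K E (· + 1)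

section Algebraic

variable [CommRing K] [AddCommGroup E] [Module K E]

theorem shiftOp_pow_apply (k : ℕ) (t : ℕ → E) (m : ℕ) :
    ((shiftOp : Module.End K (ℕ → E)) ^ k) t m = t (m + k) := by
  induction k generalizing t with
  | zero => rfl
  | succ k ih =>
    rw [pow_succ, Module.End.mul_apply, ih]
    rfl

theorem aeval_shiftOp_apply (p : K[X]) (t : ℕ → E) (m : ℕ) :
    aeval (shiftOp : Module.End K (ℕ → E)) p t m =
      ∑ i ∈ Finset.range (p.natDegree + 1), p.coeff i • t (m + i) := by
  simp [aeval_eq_sum_range, shiftOp_pow_apply]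

theorem aeval_shiftOp_X_sub_C_apply (r : K) (t : ℕ → E) (m : ℕ) :
    aeval (shiftOp : Module.End K (ℕ → E)) (X - C r) t m = t (m + 1) - r • t m := by
  simp [shiftOp]

theorem aeval_shiftOp_X_pow_add_sum_apply {n : ℕ} (c : Fin n → K) (t : ℕ → E) (m : ℕ) :
    aeval (shiftOp : Module.End K (ℕ → E)) (X ^ n + ∑ i : Fin n, C (c i) * X ^ (i : ℕ)) t m =
      t (m + n) + ∑ i : Fin n, c i • t (m + i) := by
  simp [map_sum, shiftOp_pow_apply]

end Algebraic

section Normed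

variable [NormedField K] [NormedAddCommGroup E] [NormedSpace K E]

theorem tendsto_aeval_shiftOp_apply (p : K[X]) {t : ℕ → E} (ht : Tendsto t atTop (𝓝 0)) :
    Tendsto (aeval (shiftOp : Module.End K (ℕ → E)) p t) atTop (𝓝 0) := by
  simp_rw [funext (aeval_shiftOp_apply p t)]
  simpa using tendsto_finsetSum _ fun i _ =>
    (ht.comp (tendsto_add_atTop_nat i)).const_smul (p.coeff i)

theorem eq_zero_of_succ_eq_smul_of_tendsto_zero {u : ℕ → E} {r : K} (hr : 1 ≤ ‖r‖)
    (hu : ∀ m, u (m + 1) = r • u m) (hlim : Tendsto u atTop (𝓝 0)) : u = 0 := by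
  have hgeom : ∀ m, u m = r ^ m • u 0 := by
    intro m
    induction m with
    | zero => simp
    | succ m ih => rw [hu, ih, smul_smul, pow_succ']
  have hu0 : u 0 = 0 := by
    refine norm_le_zero_iff.mp (ge_of_tendsto' (by simpa using hlim.norm) fun m => ?_)
    rw [hgeom m, norm_smul, norm_pow]
    exact le_mul_of_one_le_left (norm_nonneg _) (one_le_pow₀ hr)
  funext m
  rw [hgeom m, hu0, smul_zero, Pi.zero_apply]

theorem eq_zero_of_aeval_shiftOp_prod_eq_zero (s : Multiset K) (hs : ∀ r ∈ s, 1 ≤ ‖r‖)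
    {t : ℕ → E} (ht : Tendsto t atTop (𝓝 0))
    (h : aeval (shiftOp : Module.End K (ℕ → E)) (s.map (X - C ·)).prod t = 0) : t = 0 := by
  induction s using Multiset.induction_on generalizing t with
  | empty => simpa using h
  | cons r s ih =>
    set u := aeval (shiftOp : Module.End K (ℕ → E)) (s.map (X - C ·)).prod t
    have hu : u = 0 := by
      refine eq_zero_of_succ_eq_smul_of_tendsto_zero (hs r (s.mem_cons_self r)) (fun m => ?_)
        (tendsto_aeval_shiftOp_apply _ ht)
      rw [Multiset.map_cons, Multiset.prod_cons, map_mul, Module.End.mul_apply] at h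
      have hm := congrFun h m
      rwa [aeval_shiftOp_X_sub_C_apply, Pi.zero_apply, sub_eq_zero] at hm
    exact ih (fun r' hr' => hs r' (Multiset.mem_cons_of_mem hr')) ht hu

theorem eq_zero_of_aeval_shiftOp_eq_zero {p : K[X]} (hmonic : p.Monic) (hsplit : p.Splits)
    (hroots : ∀ r, p.IsRoot r → 1 ≤ ‖r‖) {t : ℕ → E} (ht : Tendsto t atTop (𝓝 0))
    (h : aeval (shiftOp : Module.End K (ℕ → E)) p t = 0) : t = 0 := by
  rw [hsplit.eq_prod_roots_of_monic hmonic] at h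
  exact eq_zero_of_aeval_shiftOp_prod_eq_zero _
    (fun r hr => hroots r (isRoot_of_mem_roots hr)) ht h

end Normed

end ShiftOperator

/-- if all complex roots of `p(λ) = λ^n + a_{n-1}λ^{n-1} + ⋯ + a₀`
(with integer coefficients) have modulus at least `1`, and the real sequence `t`
satisfies the recurrence `t_{m+n} = −(a_{n-1}t_{m+n-1} + ⋯ + a₀ t_m)` with
`t_m → 0`, then `t` is identically zero. -/
theorem statement16 (n : ℕ) (a : Fin n → ℤ)
    (hroots : ∀ z : ℂ, (z ^ n + ∑ i : Fin n, (a i : ℂ) * z ^ (i : ℕ)) = 0 →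
      1 ≤ ‖z‖)
    (t : ℕ → ℝ)
    (hrec : ∀ m : ℕ, t (m + n) = -∑ i : Fin n, (a i : ℝ) * t (m + i))
    (hconv : Tendsto t atTop (𝓝 0)) :
    ∀ m : ℕ, t m = 0 := by
  set p : ℂ[X] := X ^ n + ∑ i : Fin n, C (a i : ℂ) * X ^ (i : ℕ)
  have hmonic : p.Monic := monic_X_pow_add (degree_sum_fin_lt _)
  have hproots : ∀ z, p.IsRoot z → 1 ≤ ‖z‖ := fun z hz =>
    hroots z (by simpa [p, eval_finsetSum] using hz)
  have hconvℂ : Tendsto (fun m => (t m : ℂ)) atTop (𝓝 0) :=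
    (Complex.continuous_ofReal.tendsto' 0 0 Complex.ofReal_zero).comp hconv
  have hrecℂ : aeval (shiftOp : Module.End ℂ (ℕ → ℂ)) p (fun m => (t m : ℂ)) = 0 := by
    funext m
    rw [aeval_shiftOp_X_pow_add_sum_apply, hrec m]
    simp
  intro m
  simpa using congrFun (eq_zero_of_aeval_shiftOp_eq_zero hmonic (IsAlgClosed.splits p)
    hproots hconvℂ hrecℂ) m
end

section
/- Let M be an n×n matrix with rational entries and nonzero determinant, let v ∈ ℚ^n be a column vector such that v, Mv, …, M^{n−1}v are linearly independent, and let L ∈ ℝ^n be a row vector. If there is an N such that L·M^m·v is an integer for every m ≥ N, then every entry of L is rational. -/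
/-!
Shifting by the invertible `M ^ N`, the vectors `M ^ (N + k) v` (`k < n`) still form a basis of
`ℚ ^ n`, and `L` takes integer values on it. Writing these vectors as the rows of an invertible
rational matrix `W`, the vector `W L` is rational, hence so is `L = W⁻¹ (W L)`.
-/

open Matrix

theorem Matrix.linearIndependent_mulVec_pow_add {ι K m : Type*} [Field K] [Fintype m]
    [DecidableEq m] {M : Matrix m m K} (hM : IsUnit M) {v : m → K} {e : ι → ℕ}
    (hv : LinearIndependent K fun i => M ^ e i *ᵥ v) (N : ℕ) :
    LinearIndependent K fun i => M ^ (N + e i) *ᵥ v := by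
  have hinj : Function.Injective (M ^ N).mulVec :=
    mulVec_injective_iff_isUnit.2 (hM.pow N)
  simpa only [Function.comp_def, mulVecLin_apply, mulVec_mulVec, pow_add] using
    hv.map' (M ^ N).mulVecLin (LinearMap.ker_eq_bot.2 hinj)

theorem Matrix.exists_comp_eq_of_mulVec_map_mem_range {ι K F : Type*} [Fintype ι] [DecidableEq ι]
    [CommRing K] [CommRing F] (f : K →+* F) {W : Matrix ι ι K} (hW : IsUnit W) {L : ι → F}
    (hL : ∀ k, (W.map f *ᵥ L) k ∈ Set.range f) :
    ∃ q : ι → K, f ∘ q = L := by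
  choose c hc using hL
  refine ⟨W⁻¹ *ᵥ c, ?_⟩
  have hWc : f ∘ c = W.map f *ᵥ L := funext hc
  have hinv : W⁻¹ * W = 1 := nonsing_inv_mul W ((isUnit_iff_isUnit_det W).1 hW)
  calc f ∘ (W⁻¹ *ᵥ c) = (W⁻¹ * W).map f *ᵥ L := by
        ext i
        rw [Function.comp_apply, RingHom.map_mulVec, hWc, mulVec_mulVec, Matrix.map_mul]
    _ = L := by rw [hinv, Matrix.map_one _ f.map_zero f.map_one, one_mulVec]

/-- if `M` is a rational `n×n` matrix with nonzero determinant,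
`v ∈ ℚ^n` is such that `v, Mv, …, M^{n-1}v` are linearly independent, and the
real row vector `L` is such that `L·M^m·v` is an integer for all large `m`,
then every entry of `L` is rational. -/
theorem statement17 (n : ℕ) (M : Matrix (Fin n) (Fin n) ℚ) (hdet : M.det ≠ 0)
    (v : Fin n → ℚ)
    (hv : LinearIndependent ℚ (fun i : Fin n => (M ^ (i : ℕ)).mulVec v))
    (L : Fin n → ℝ)
    (h : ∃ N : ℕ, ∀ m : ℕ, N ≤ m → ∃ j : ℤ,
      dotProduct (Matrix.vecMul L ((M.map (Rat.cast : ℚ → ℝ)) ^ m))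
        (fun i => ((v i : ℝ))) = (j : ℝ)) :
    ∀ i : Fin n, ∃ q : ℚ, L i = (q : ℝ) := by
  obtain ⟨N, hN⟩ := h
  let W : Matrix (Fin n) (Fin n) ℚ := of fun k => M ^ (N + k) *ᵥ v
  have hM : IsUnit M := (isUnit_iff_isUnit_det M).2 hdet.isUnit
  have hW : IsUnit W :=
    linearIndependent_rows_iff_isUnit.1 (linearIndependent_mulVec_pow_add hM hv N)
  have hWL : ∀ k, (W.map (Rat.castHom ℝ) *ᵥ L) k ∈ Set.range (Rat.castHom ℝ) := by
    intro k
    obtain ⟨j, hj⟩ := hN (N + k) (Nat.le_add_right _ _)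
    refine ⟨j, ?_⟩
    have hrow : (fun i => W.map (Rat.castHom ℝ) k i) =
        M.map (Rat.castHom ℝ) ^ (N + k) *ᵥ fun i => (v i : ℝ) := by
      ext i
      rw [← Matrix.map_pow]
      exact (Rat.castHom ℝ).map_mulVec _ v i
    rw [mulVec, hrow, dotProduct_comm, dotProduct_mulVec]
    simpa using hj.symm
  obtain ⟨q, hq⟩ := exists_comp_eq_of_mulVec_map_mem_range (Rat.castHom ℝ) hW hWL
  exact fun i => ⟨q i, by rw [← hq]; rfl⟩
end
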